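/- Selection strategy lemma: for every type tree Xt, every outcome function q : Path Xt → R and every selection function tree εt : 𝒥 Xt, the strategy strategy(εt, q) is optimal for the game (Xt, R, q, ε̄t), where ε̄t is the quantifier tree induced by εt. -/
import Mathlib


/-- Dependent type trees: the empty tree and `X :: Xf` for a type `X` and a forest `Xf`. -/
inductive GTree : Type 1 where
  | nil : GTree
  | cons : (X : Type) → (X → GTree) → GTree

/-- Paths in a dependent type tree. -/
def GTree.Path : GTree → Type
  | .nil => PUnit
  | .cons X Xf => (x : X) × (Xf x).Path

/-- `S`-structured trees over a type tree. -/
def GTree.Str (S : Type → Type) : GTree → Type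
  | .nil => PUnit
  | .cons X Xf => S X × ((x : X) → (Xf x).Str S)

/-- Quantifiers with outcome type `R`. -/
def K (R X : Type) : Type := (X → R) → R

/-- Selection functions with outcome type `R`. -/
def J (R X : Type) : Type := (X → R) → X

/-- The quantifier attained by a selection function. -/
def bar {R X : Type} (ε : J R X) : K R X := fun p => p (ε p)

/-- The quantifier tree induced by a selection function tree. -/
def barTree {R : Type} : (t : GTree) → t.Str (J R) → t.Str (K R)
  | .nil, _ => ⟨⟩
  | .cons _ Xf, εt => ⟨bar εt.1, fun x => barTree (Xf x) (εt.2 x)⟩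

/-- Binary dependent product of selection functions. -/
def prodJ {R X : Type} {Y : X → Type} (ε : J R X) (δ : (x : X) → J R (Y x)) :
    J R ((x : X) × Y x) :=
  fun q =>
    let ν : (x : X) → Y x := fun x => δ x (fun y => q ⟨x, y⟩)
    let x₀ : X := ε (fun x => q ⟨x, ν x⟩)
    ⟨x₀, ν x₀⟩

/-- Iterated product of a selection function tree. -/
def Jsequence {R : Type} : (t : GTree) → t.Str (J R) → J R t.Path
  | .nil, _ => fun _ => ⟨⟩
  | .cons _ Xf, εt => prodJ εt.1 (fun x => Jsequence (Xf x) (εt.2 x))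

/-- Strategies over a type tree. -/
def GTree.Strategy (t : GTree) : Type := t.Str (fun X => X)

/-- The strategic path of a strategy. -/
def spath : (t : GTree) → t.Strategy → t.Path
  | .nil, _ => ⟨⟩
  | .cons _ Xf, σ => ⟨σ.1, spath (Xf σ.1) (σ.2 σ.1)⟩

/-- The strategy induced by a selection function tree and an outcome function. -/
def strategyOf {R : Type} : (t : GTree) → t.Str (J R) → (t.Path → R) → t.Strategy
  | .nil, _, _ => ⟨⟩
  | .cons X Xf, εt, q =>
      ⟨(Jsequence (.cons X Xf) εt q).1,
       fun x => strategyOf (Xf x) (εt.2 x) (fun y => q ⟨x, y⟩)⟩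

/-- Optimality of a strategy for the game `(t, R, q, φt)`. -/
def Optimal {R : Type} : (t : GTree) → (t.Path → R) → t.Str (K R) → t.Strategy → Prop
  | .nil, _, _, _ => True
  | .cons _ Xf, q, φt, σ =>
      (q ⟨σ.1, spath (Xf σ.1) (σ.2 σ.1)⟩ = φt.1 (fun x => q ⟨x, spath (Xf x) (σ.2 x)⟩)) ∧
      ∀ x, Optimal (Xf x) (fun y => q ⟨x, y⟩) (φt.2 x) (σ.2 x)


theorem spath_strategyOf {R : Type} : ∀ (t : GTree) (εt : t.Str (J R)) (q : t.Path → R),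
    spath t (strategyOf t εt q) = Jsequence t εt q
  | .nil, _, _ => rfl
  | .cons X Xf, εt, q => by
      simp only [strategyOf, spath]
      rw [spath_strategyOf (Xf _) (εt.2 _)]
      rfl

/-- Selection strategy lemma: `strategyOf εt q` is optimal for the game
`(t, R, q, barTree εt)`. -/
theorem selection_strategy_lemma {R : Type} (t : GTree) (q : t.Path → R)
    (εt : t.Str (J R)) :
    Optimal t q (barTree t εt) (strategyOf t εt q) := by
  induction t with
  | nil => trivial
  | cons X Xf ih =>
      refine ⟨?_, fun x => ih x (fun y => q ⟨x, y⟩) (εt.2 x)⟩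
      simp only [strategyOf, spath_strategyOf]
      rfl
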